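/- For every real constant c > 0, the function h(α) = α · (2^(c/α) − 1)² is strictly antitone on (0, ∞); moreover h(α) → +∞ as α → 0⁺ and h(α) → 0 as α → +∞. -/

import Mathlib

/-!
Substituting `t = c / α` gives `α (2^(c/α) - 1)² = c · t · s(t)²`, where `s(t) = (2^t - 1) / t` is the
slope of the secant of the strictly convex function `t ↦ 2^t` through `0`. Hence `s` is increasing
and bounded below by `log 2 > 0`, so `t · s(t)²` is strictly increasing, tends to `+∞` as `t → ∞`
and to `0 · (log 2)² = 0` as `t → 0⁺`, since `s(t) → log 2` is the derivative of `2^t` at `0`.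
-/

open Filter Set Real Topology

lemma strictConvexOn_rpow_left {b : ℝ} (hb : 1 < b) : StrictConvexOn ℝ univ (fun x : ℝ ↦ b ^ x) := by
  refine ⟨convex_univ, fun x _ y _ hxy s t hs ht hst ↦ ?_⟩
  have hlog : 0 < log b := log_pos hb
  have := strictConvexOn_exp.2 (mem_univ (log b * x)) (mem_univ (log b * y))
    (by simpa [hlog.ne'] using hxy) hs ht hst
  simp only [smul_eq_mul, rpow_def_of_pos (zero_lt_one.trans hb)] at this ⊢
  convert this using 2; ring

lemma strictMonoOn_rpow_sub_one_div {b : ℝ} (hb : 1 < b) :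
    StrictMonoOn (fun t : ℝ ↦ (b ^ t - 1) / t) (Ioi 0) := fun x hx y hy hxy ↦ by
  simpa using (strictConvexOn_rpow_left hb).secant_strict_mono (mem_univ 0) (mem_univ x)
    (mem_univ y) (ne_of_gt hx) (ne_of_gt hy) hxy

lemma log_le_rpow_sub_one_div {b t : ℝ} (hb : 0 < b) (ht : 0 < t) :
    log b ≤ (b ^ t - 1) / t := by
  rw [le_div_iff₀ ht, rpow_def_of_pos hb]
  linarith [add_one_le_exp (log b * t)]

lemma tendsto_rpow_sub_one_div_nhdsNE_zero {b : ℝ} (hb : 0 < b) :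
    Tendsto (fun t : ℝ ↦ (b ^ t - 1) / t) (𝓝[≠] 0) (𝓝 (log b)) := by
  simpa [div_eq_inv_mul] using ((hasStrictDerivAt_const_rpow hb 0).hasDerivAt).tendsto_slope_zero

lemma strictMonoOn_rpow_sub_one_sq_div {b : ℝ} (hb : 1 < b) :
    StrictMonoOn (fun t : ℝ ↦ (b ^ t - 1) ^ 2 / t) (Ioi 0) := fun x hx y hy hxy ↦ by
  have hx' : (0 : ℝ) < x := hx
  have hslope := strictMonoOn_rpow_sub_one_div hb hx hy hxy
  have hslope_pos : 0 < (b ^ x - 1) / x :=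
    (log_pos hb).trans_le (log_le_rpow_sub_one_div (zero_lt_one.trans hb) hx')
  calc (b ^ x - 1) ^ 2 / x = x * ((b ^ x - 1) / x) ^ 2 := by field_simp
    _ < y * ((b ^ y - 1) / y) ^ 2 := by gcongr
    _ = (b ^ y - 1) ^ 2 / y := by field_simp

lemma tendsto_rpow_sub_one_sq_div_atTop {b : ℝ} (hb : 1 < b) :
    Tendsto (fun t : ℝ ↦ (b ^ t - 1) ^ 2 / t) atTop atTop := by
  refine tendsto_atTop_mono' _ ?_ (tendsto_id.atTop_mul_const (pow_pos (log_pos hb) 2))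
  filter_upwards [eventually_gt_atTop 0] with t ht
  calc t * log b ^ 2 ≤ t * ((b ^ t - 1) / t) ^ 2 := by
        gcongr
        exacts [(log_pos hb).le, log_le_rpow_sub_one_div (zero_lt_one.trans hb) ht]
    _ = (b ^ t - 1) ^ 2 / t := by field_simp

lemma tendsto_rpow_sub_one_sq_div_nhdsGT_zero {b : ℝ} (hb : 0 < b) :
    Tendsto (fun t : ℝ ↦ (b ^ t - 1) ^ 2 / t) (𝓝[>] 0) (𝓝 0) := by
  have hslope := (tendsto_rpow_sub_one_div_nhdsNE_zero hb).mono_left (nhdsGT_le_nhdsNE 0)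
  have := (tendsto_nhdsWithin_of_tendsto_nhds tendsto_id).mul (hslope.pow 2)
  rw [zero_mul] at this
  refine this.congr' ?_
  filter_upwards [self_mem_nhdsWithin] with t (ht : 0 < t)
  simp only [id]
  field_simp

/-- `h(α) = α·(2^(c/α) − 1)²` is strictly antitone on `(0, ∞)`, blows up at `0⁺`
and vanishes at `+∞`. -/
theorem strictAntiOn_alpha_mul_sq
    (c : ℝ) (hc : 0 < c) :
    StrictAntiOn (fun α : ℝ => α * ((2 : ℝ) ^ (c / α) - 1) ^ 2) (Ioi (0 : ℝ)) ∧
    Tendsto (fun α : ℝ => α * ((2 : ℝ) ^ (c / α) - 1) ^ 2)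
      (nhdsWithin 0 (Ioi 0)) atTop ∧
    Tendsto (fun α : ℝ => α * ((2 : ℝ) ^ (c / α) - 1) ^ 2) atTop (nhds 0) := by
  set k : ℝ → ℝ := fun t ↦ ((2 : ℝ) ^ t - 1) ^ 2 / t
  have h_eq : (fun α : ℝ => α * ((2 : ℝ) ^ (c / α) - 1) ^ 2) = fun α ↦ c * k (c / α) := by
    ext α
    rcases eq_or_ne α 0 with rfl | hα
    · simp [k]
    · simp only [k]
      field_simp
  have h_inv_zero : Tendsto (fun α : ℝ ↦ c / α) (𝓝[>] 0) atTop := by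
    simpa [div_eq_mul_inv] using tendsto_inv_nhdsGT_zero.const_mul_atTop hc
  have h_inv_atTop : Tendsto (fun α : ℝ ↦ c / α) atTop (𝓝[>] 0) :=
    tendsto_nhdsWithin_iff.2 ⟨tendsto_const_nhds.div_atTop tendsto_id,
      eventually_gt_atTop 0 |>.mono fun α hα ↦ div_pos hc hα⟩
  rw [h_eq]
  refine ⟨?_, ?_, ?_⟩
  · refine fun x hx y hy hxy ↦ mul_lt_mul_of_pos_left ?_ hc
    exact strictMonoOn_rpow_sub_one_sq_div one_lt_two (div_pos hc hy) (div_pos hc hx)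
      (div_lt_div_of_pos_left hc hx hxy)
  · exact ((tendsto_rpow_sub_one_sq_div_atTop one_lt_two).comp h_inv_zero).const_mul_atTop hc
  · simpa using ((tendsto_rpow_sub_one_sq_div_nhdsGT_zero two_pos).comp h_inv_atTop).const_mul c
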